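/- Let v : ℝ → ℝ be continuous with ∫_ℝ (1+|x|)|v(x)|dx < ∞ and let k ∈ ℝ, k ≠ 0. Then the functions f₁(·,k) and f₁(·,−k) form a basis of the solution space of −f'' + vf = k²f, so there are unique complex numbers a(k), b(k) with f₂(x,k) = a(k) f₁(x,−k) + b(k) f₁(x,k) for all x ∈ ℝ; moreover a(k) = W(f₁(·,k), f₂(·,k))/(2ik), and the transition coefficients satisfy |a(k)|² = 1 + |b(k)|². -/

import Mathlib

open Real Set MeasureTheory Filter Complex

/-- `f` (with derivative `f'` and second derivative `f''`) is a twice continuously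
differentiable solution of the one-dimensional Schrödinger equation `-f'' + v·f = k²·f` on `ℝ`. -/
def IsSchrodingerSolution (v : ℝ → ℝ) (k : ℂ) (f f' f'' : ℝ → ℂ) : Prop :=
  (∀ x : ℝ, HasDerivAt f (f' x) x) ∧ (∀ x : ℝ, HasDerivAt f' (f'' x) x) ∧
    Continuous f'' ∧ (∀ x : ℝ, -(f'' x) + (v x : ℂ) * f x = k ^ 2 * f x)

/-- The Jost asymptotics at `+∞`: `e^{-ikx} f(x) → 1` and `e^{-ikx} f'(x) → ik` as `x → +∞`. -/
def IsJostAtPlusInfinity (k : ℂ) (f f' : ℝ → ℂ) : Prop :=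
  Tendsto (fun x : ℝ => Complex.exp (-Complex.I * k * x) * f x) atTop (nhds 1) ∧
    Tendsto (fun x : ℝ => Complex.exp (-Complex.I * k * x) * f' x) atTop (nhds (Complex.I * k))

/-- The Jost asymptotics at `-∞`: `e^{ikx} f(x) → 1` and `e^{ikx} f'(x) → -ik` as `x → -∞`. -/
def IsJostAtMinusInfinity (k : ℂ) (f f' : ℝ → ℂ) : Prop :=
  Tendsto (fun x : ℝ => Complex.exp (Complex.I * k * x) * f x) atBot (nhds 1) ∧
    Tendsto (fun x : ℝ => Complex.exp (Complex.I * k * x) * f' x) atBot (nhds (-Complex.I * k))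

/-!
Wronskians of solutions of `-f'' + v f = k² f` are constant, so they can be read off from the
Jost asymptotics. At `+∞` this gives `W(f₁(·,k), f₁(·,-k)) = 2ik ≠ 0`; hence the two Jost
solutions are independent, they span the solution space by uniqueness for the Cauchy problem,
and `a(k) = W(f₁(·,k), f₂(·,k)) / 2ik`. For real `k`, `conj f₁(·,k)` is again a Jost solution
at `+∞` for `-k`, so `f₁(·,-k) = conj f₁(·,k)`. Evaluating `W(f₂, conj f₂)` once at `-∞`, where
it is `-2ik`, and once through the decomposition of `f₂`, where it is `(|b|² - |a|²) 2ik`,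
gives `|a|² = 1 + |b|²`.
-/

open ComplexConjugate Topology

def wronskian (f f' g g' : ℝ → ℂ) (x : ℝ) : ℂ := f' x * g x - f x * g' x

section Wronskian

variable {f f' g g' : ℝ → ℂ}

theorem tendsto_wronskian {l : Filter ℝ} {u w : ℝ → ℂ} {A A' B B' : ℂ}
    (huw : ∀ x, u x * w x = 1)
    (hf : Tendsto (fun x => u x * f x) l (𝓝 A)) (hf' : Tendsto (fun x => u x * f' x) l (𝓝 A'))
    (hg : Tendsto (fun x => w x * g x) l (𝓝 B)) (hg' : Tendsto (fun x => w x * g' x) l (𝓝 B')) :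
    Tendsto (wronskian f f' g g') l (𝓝 (A' * B - A * B')) := by
  have hW : wronskian f f' g g' = fun x => u x * f' x * (w x * g x) - u x * f x * (w x * g' x) := by
    funext x
    show f' x * g x - f x * g' x = _
    linear_combination (f x * g' x - f' x * g x) * huw x
  rw [hW]
  exact (hf'.mul hg).sub (hf.mul hg')

theorem eq_zero_of_wronskian_eq_zero {d d' : ℝ → ℂ} {x : ℝ} (hfg : wronskian f f' g g' x ≠ 0)
    (hf : wronskian f f' d d' x = 0) (hg : wronskian g g' d d' x = 0) : d x = 0 ∧ d' x = 0 := by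
  unfold wronskian at *
  constructor
  · refine (mul_eq_zero.1 ?_).resolve_left hfg
    linear_combination g x * hf - f x * hg
  · refine (mul_eq_zero.1 ?_).resolve_left hfg
    linear_combination g' x * hf - f' x * hg

theorem coeffs_eq_zero_of_wronskian_ne_zero (hf : ∀ x, HasDerivAt f (f' x) x)
    (hg : ∀ x, HasDerivAt g (g' x) x) {t₀ : ℝ} (hfg : wronskian f f' g g' t₀ ≠ 0) {c₁ c₂ : ℂ}
    (h : ∀ x, c₁ * g x + c₂ * f x = 0) : c₁ = 0 ∧ c₂ = 0 := by
  have hderiv : HasDerivAt (fun x => c₁ * g x + c₂ * f x) (c₁ * g' t₀ + c₂ * f' t₀) t₀ :=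
    ((hg t₀).const_mul c₁).add ((hf t₀).const_mul c₂)
  rw [funext h] at hderiv
  have h' : c₁ * g' t₀ + c₂ * f' t₀ = 0 := hderiv.unique (hasDerivAt_const t₀ 0)
  unfold wronskian at hfg
  constructor
  · refine (mul_eq_zero.1 ?_).resolve_right hfg
    linear_combination f' t₀ * h t₀ - f t₀ * h'
  · refine (mul_eq_zero.1 ?_).resolve_right hfg
    linear_combination g t₀ * h' - g' t₀ * h t₀

theorem norm_sq_eq_one_add_norm_sq_of_wronskian_eq {a b c : ℂ} {x : ℝ} (hc : c ≠ 0)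
    (hg : wronskian (fun x => conj (g x)) (fun x => conj (g' x)) g g' x = c)
    (hab : wronskian (fun x => a * g x + b * conj (g x)) (fun x => a * g' x + b * conj (g' x))
      (fun x => conj (a * g x + b * conj (g x))) (fun x => conj (a * g' x + b * conj (g' x))) x
      = -c) :
    ‖a‖ ^ 2 = 1 + ‖b‖ ^ 2 := by
  have h : a * conj a = 1 + b * conj b := by
    refine mul_right_cancel₀ hc ?_
    rw [← hg] at hab ⊢
    simp only [wronskian, map_add, map_mul, conj_conj] at hab ⊢
    linear_combination -hab
  rw [mul_conj', mul_conj'] at h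
  exact_mod_cast h

end Wronskian

theorem existsUnique_of_exists_of_coeffs_eq_zero {α : Type*} {f g h : α → ℂ}
    (hindep : ∀ c₁ c₂ : ℂ, (∀ x, c₁ * g x + c₂ * f x = 0) → c₁ = 0 ∧ c₂ = 0)
    (hex : ∃ c₁ c₂ : ℂ, ∀ x, h x = c₁ * g x + c₂ * f x) :
    ∃! p : ℂ × ℂ, ∀ x, h x = p.1 * g x + p.2 * f x := by
  obtain ⟨a, b, hab⟩ := hex
  refine ⟨(a, b), hab, fun c hc => ?_⟩
  obtain ⟨h₁, h₂⟩ := hindep (c.1 - a) (c.2 - b) fun x => by linear_combination hab x - hc x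
  exact Prod.ext (sub_eq_zero.1 h₁) (sub_eq_zero.1 h₂)

theorem tendsto_mul_zero_iff_of_norm_eq_one {α : Type*} {l : Filter α} {u F : α → ℂ}
    (hu : ∀ x, ‖u x‖ = 1) : Tendsto (fun x => u x * F x) l (𝓝 0) ↔ Tendsto F l (𝓝 0) := by
  rw [tendsto_zero_iff_norm_tendsto_zero, tendsto_zero_iff_norm_tendsto_zero (f := F)]
  simp only [norm_mul, hu, one_mul]

theorem tendsto_exp_mul_conj {α : Type*} {l : Filter α} {φ F : α → ℂ} {A : ℂ}
    (h : Tendsto (fun x => exp (φ x) * F x) l (𝓝 A)) :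
    Tendsto (fun x => exp (conj (φ x)) * conj (F x)) l (𝓝 (conj A)) := by
  simpa [Function.comp_def, exp_conj] using (Complex.continuous_conj.tendsto A).comp h

theorem exp_mul_mul_exp_mul_neg_mul (c k x : ℂ) : exp (c * k * x) * exp (c * -k * x) = 1 := by
  rw [← Complex.exp_add, ← Complex.exp_zero]
  ring_nf

theorem IsJostAtPlusInfinity.conj {k : ℂ} {f f' : ℝ → ℂ} (h : IsJostAtPlusInfinity k f f') :
    IsJostAtPlusInfinity (-conj k) (fun x => conj (f x)) (fun x => conj (f' x)) := by
  constructor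
  · convert tendsto_exp_mul_conj h.1 using 3 <;> simp
  · convert tendsto_exp_mul_conj h.2 using 3 <;> simp

theorem IsJostAtMinusInfinity.conj {k : ℂ} {f f' : ℝ → ℂ} (h : IsJostAtMinusInfinity k f f') :
    IsJostAtMinusInfinity (-conj k) (fun x => conj (f x)) (fun x => conj (f' x)) := by
  constructor
  · convert tendsto_exp_mul_conj h.1 using 3 <;> simp
  · convert tendsto_exp_mul_conj h.2 using 3 <;> simp

section Solutions

variable {v : ℝ → ℝ} {k : ℂ} {f f' f'' g g' g'' : ℝ → ℂ}

theorem isSchrodingerSolution_neg_iff :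
    IsSchrodingerSolution v (-k) f f' f'' ↔ IsSchrodingerSolution v k f f' f'' := by
  simp only [IsSchrodingerSolution, neg_sq]

theorem IsSchrodingerSolution.add (hf : IsSchrodingerSolution v k f f' f'')
    (hg : IsSchrodingerSolution v k g g' g'') :
    IsSchrodingerSolution v k (fun x => f x + g x) (fun x => f' x + g' x)
      (fun x => f'' x + g'' x) :=
  ⟨fun x => (hf.1 x).add (hg.1 x), fun x => (hf.2.1 x).add (hg.2.1 x), hf.2.2.1.add hg.2.2.1,
    fun x => by linear_combination hf.2.2.2 x + hg.2.2.2 x⟩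

theorem IsSchrodingerSolution.sub (hf : IsSchrodingerSolution v k f f' f'')
    (hg : IsSchrodingerSolution v k g g' g'') :
    IsSchrodingerSolution v k (fun x => f x - g x) (fun x => f' x - g' x)
      (fun x => f'' x - g'' x) :=
  ⟨fun x => (hf.1 x).sub (hg.1 x), fun x => (hf.2.1 x).sub (hg.2.1 x), hf.2.2.1.sub hg.2.2.1,
    fun x => by linear_combination hf.2.2.2 x - hg.2.2.2 x⟩

theorem IsSchrodingerSolution.const_mul (c : ℂ) (hf : IsSchrodingerSolution v k f f' f'') :
    IsSchrodingerSolution v k (fun x => c * f x) (fun x => c * f' x) (fun x => c * f'' x) :=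
  ⟨fun x => (hf.1 x).const_mul c, fun x => (hf.2.1 x).const_mul c,
    continuous_const.mul hf.2.2.1, fun x => by linear_combination c * hf.2.2.2 x⟩

theorem IsSchrodingerSolution.conj (hf : IsSchrodingerSolution v k f f' f'') :
    IsSchrodingerSolution v (conj k) (fun x => conj (f x)) (fun x => conj (f' x))
      (fun x => conj (f'' x)) :=
  ⟨fun x => (hf.1 x).star, fun x => (hf.2.1 x).star, Complex.continuous_conj.comp hf.2.2.1,
    fun x => by simpa using congrArg conj (hf.2.2.2 x)⟩

theorem IsSchrodingerSolution.wronskian_eq (hf : IsSchrodingerSolution v k f f' f'')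
    (hg : IsSchrodingerSolution v k g g' g'') (x y : ℝ) :
    wronskian f f' g g' x = wronskian f f' g g' y := by
  have hderiv : ∀ t, HasDerivAt (wronskian f f' g g') 0 t := fun t => by
    refine (((hf.2.1 t).mul (hg.1 t)).sub ((hf.1 t).mul (hg.2.1 t))).congr_deriv ?_
    linear_combination f t * hg.2.2.2 t - g t * hf.2.2.2 t
  exact is_const_of_deriv_eq_zero (fun t => (hderiv t).differentiableAt)
    (fun t => (hderiv t).deriv) x y

theorem IsSchrodingerSolution.wronskian_eq_of_tendsto (hf : IsSchrodingerSolution v k f f' f'')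
    (hg : IsSchrodingerSolution v k g g' g'') {l : Filter ℝ} [l.NeBot] {c : ℂ}
    (h : Tendsto (wronskian f f' g g') l (𝓝 c)) (x : ℝ) : wronskian f f' g g' x = c :=
  tendsto_nhds_unique (tendsto_const_nhds.congr fun y => hf.wronskian_eq hg x y) h

end Solutions

def schrodingerField (v : ℝ → ℝ) (k : ℂ) (t : ℝ) (y : ℂ × ℂ) : ℂ × ℂ :=
  (y.2, ((v t : ℂ) - k ^ 2) * y.1)

theorem lipschitzWith_schrodingerField (v : ℝ → ℝ) (k : ℂ) (t : ℝ) :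
    LipschitzWith (max 1 ‖(v t : ℂ) - k ^ 2‖₊) (schrodingerField v k t) := by
  have h := (LipschitzWith.prod_snd (α := ℂ) (β := ℂ)).prodMk
    ((lipschitzWith_smul ((v t : ℂ) - k ^ 2)).comp LipschitzWith.prod_fst)
  rwa [mul_one] at h

section Uniqueness

variable {v : ℝ → ℝ} {k : ℂ} {f f' f'' g g' g'' : ℝ → ℂ}

theorem IsSchrodingerSolution.hasDerivAt_schrodingerField (hf : IsSchrodingerSolution v k f f' f'')
    (t : ℝ) : HasDerivAt (fun t => (f t, f' t)) (schrodingerField v k t (f t, f' t)) t := by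
  have hf'' : f'' t = ((v t : ℂ) - k ^ 2) * f t := by linear_combination -hf.2.2.2 t
  simpa [schrodingerField, hf''] using (hf.1 t).prodMk (hf.2.1 t)

theorem IsSchrodingerSolution.eq_of_eq_of_deriv_eq (hv : Continuous v)
    (hf : IsSchrodingerSolution v k f f' f'') (hg : IsSchrodingerSolution v k g g' g'') {t₀ : ℝ}
    (h₀ : f t₀ = g t₀) (h₀' : f' t₀ = g' t₀) : f = g := by
  funext x
  set a := min t₀ x - 1
  set b := max t₀ x + 1
  obtain ⟨C, hC⟩ := isCompact_Icc.exists_bound_of_continuousOn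
    ((continuous_ofReal.comp hv).sub (continuous_const (y := k ^ 2))).continuousOn (s := Icc a b)
  have hlip : ∀ t ∈ Ioo a b, LipschitzOnWith (max 1 C.toNNReal) (schrodingerField v k t) univ :=
    fun t ht => ((lipschitzWith_schrodingerField v k t).weaken (max_le_max le_rfl
      (by simpa using Real.toNNReal_le_toNNReal (hC t (Ioo_subset_Icc_self ht))))).lipschitzOnWith
  have hx : x ∈ Ioo a b := ⟨by linarith [min_le_right t₀ x], by linarith [le_max_right t₀ x]⟩
  have ht₀ : t₀ ∈ Ioo a b := ⟨by linarith [min_le_left t₀ x], by linarith [le_max_left t₀ x]⟩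
  exact congrArg Prod.fst (ODE_solution_unique_of_mem_Ioo hlip ht₀
    (fun t _ => ⟨hf.hasDerivAt_schrodingerField t, mem_univ _⟩)
    (fun t _ => ⟨hg.hasDerivAt_schrodingerField t, mem_univ _⟩) (Prod.ext h₀ h₀') hx)

theorem IsSchrodingerSolution.exists_eq_add_of_wronskian_ne_zero (hv : Continuous v)
    (hf : IsSchrodingerSolution v k f f' f'') (hg : IsSchrodingerSolution v k g g' g'') {t₀ : ℝ}
    (hfg : wronskian f f' g g' t₀ ≠ 0) {h h' h'' : ℝ → ℂ}
    (hh : IsSchrodingerSolution v k h h' h'') : ∃ c₁ c₂ : ℂ, ∀ x, h x = c₁ * g x + c₂ * f x := by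
  -- Cramer's rule for the Cauchy data of `h` at `t₀`
  set c₁ := wronskian f f' h h' t₀ / wronskian f f' g g' t₀
  set c₂ := wronskian h h' g g' t₀ / wronskian f f' g g' t₀
  refine ⟨c₁, c₂, congrFun (hh.eq_of_eq_of_deriv_eq hv ((hg.const_mul c₁).add (hf.const_mul c₂))
    (t₀ := t₀) ?_ ?_)⟩
  all_goals
    simp only [c₁, c₂]
    field_simp
    simp only [wronskian]
    ring

end Uniqueness

section Jost

variable {v : ℝ → ℝ} {p p' p'' q q' q'' : ℝ → ℂ}

theorem IsSchrodingerSolution.wronskian_eq_of_isJostAtPlusInfinity {k : ℂ}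
    (hp : IsSchrodingerSolution v k p p' p'') (hpj : IsJostAtPlusInfinity k p p')
    (hq : IsSchrodingerSolution v k q q' q'') (hqj : IsJostAtPlusInfinity (-k) q q') (x : ℝ) :
    wronskian p p' q q' x = 2 * I * k := by
  refine hp.wronskian_eq_of_tendsto hq (l := atTop) ?_ x
  convert tendsto_wronskian (fun x => exp_mul_mul_exp_mul_neg_mul _ k x)
    hpj.1 hpj.2 hqj.1 hqj.2 using 2
  ring

theorem IsSchrodingerSolution.wronskian_eq_of_isJostAtMinusInfinity {k : ℂ}
    (hp : IsSchrodingerSolution v k p p' p'') (hpj : IsJostAtMinusInfinity k p p')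
    (hq : IsSchrodingerSolution v k q q' q'') (hqj : IsJostAtMinusInfinity (-k) q q') (x : ℝ) :
    wronskian p p' q q' x = -(2 * I * k) := by
  refine hp.wronskian_eq_of_tendsto hq (l := atBot) ?_ x
  convert tendsto_wronskian (fun x => exp_mul_mul_exp_mul_neg_mul _ k x)
    hpj.1 hpj.2 hqj.1 hqj.2 using 2
  ring

theorem IsJostAtPlusInfinity.unique {k : ℝ} (hk : k ≠ 0)
    (hp : IsSchrodingerSolution v k p p' p'') (hpj : IsJostAtPlusInfinity k p p')
    (hq : IsSchrodingerSolution v k q q' q'') (hqj : IsJostAtPlusInfinity k q q') :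
    p = q ∧ p' = q' := by
  have hpc := hp.conj
  have hpcj := hpj.conj
  rw [conj_ofReal] at hpc hpcj
  have hW x : wronskian p p' (fun x => conj (p x)) (fun x => conj (p' x)) x ≠ 0 := by
    rw [hp.wronskian_eq_of_isJostAtPlusInfinity hpj hpc hpcj x]
    simp [hk]
  have hd := hp.sub hq
  have hd₀ : Tendsto (fun x : ℝ => exp (-I * k * x) * (p x - q x)) atTop (𝓝 0) := by
    simpa [mul_sub] using hpj.1.sub hqj.1
  have hd₀' : Tendsto (fun x : ℝ => exp (-I * k * x) * (p' x - q' x)) atTop (𝓝 0) := by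
    simpa [mul_sub] using hpj.2.sub hqj.2
  -- on the real axis the normalizing factors have modulus one, so they may be reversed
  have hflip {F : ℝ → ℂ} (hF : Tendsto (fun x : ℝ => exp (-I * k * x) * F x) atTop (𝓝 0)) :
      Tendsto (fun x : ℝ => exp (-I * -k * x) * F x) atTop (𝓝 0) := by
    exact (tendsto_mul_zero_iff_of_norm_eq_one fun x => by simp [norm_exp]).2
      ((tendsto_mul_zero_iff_of_norm_eq_one fun x => by simp [norm_exp]).1 hF)
  have hpd x : wronskian p p' (fun x => p x - q x) (fun x => p' x - q' x) x = 0 :=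
    hp.wronskian_eq_of_tendsto hd (by
      simpa using tendsto_wronskian (fun x => exp_mul_mul_exp_mul_neg_mul _ k x) hpj.1 hpj.2
        (hflip hd₀) (hflip hd₀')) x
  have hpcd x : wronskian _ _ (fun x => p x - q x) (fun x => p' x - q' x) x = 0 :=
    hpc.wronskian_eq_of_tendsto hd (by
      simpa using tendsto_wronskian
        (fun x => (mul_comm _ _).trans (exp_mul_mul_exp_mul_neg_mul _ k x))
        hpcj.1 hpcj.2 hd₀ hd₀') x
  have hpq x := eq_zero_of_wronskian_eq_zero (hW x) (hpd x) (hpcd x)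
  exact ⟨funext fun x => sub_eq_zero.1 (hpq x).1, funext fun x => sub_eq_zero.1 (hpq x).2⟩

end Jost

theorem transition_coefficients_general
    (v : ℝ → ℝ) (hv : Continuous v)
    (k : ℝ) (hk : k ≠ 0)
    (f₁ f₁' f₁'' g₁ g₁' g₁'' f₂ f₂' f₂'' : ℝ → ℂ)
    (h1 : IsSchrodingerSolution v (k : ℂ) f₁ f₁' f₁'')
    (hj1 : IsJostAtPlusInfinity (k : ℂ) f₁ f₁')
    (hg : IsSchrodingerSolution v (-(k : ℂ)) g₁ g₁' g₁'')
    (hjg : IsJostAtPlusInfinity (-(k : ℂ)) g₁ g₁')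
    (h2 : IsSchrodingerSolution v (k : ℂ) f₂ f₂' f₂'')
    (hj2 : IsJostAtMinusInfinity (k : ℂ) f₂ f₂') :
    (∀ c₁ c₂ : ℂ, (∀ x : ℝ, c₁ * g₁ x + c₂ * f₁ x = 0) → c₁ = 0 ∧ c₂ = 0) ∧
    (∀ h h' h'' : ℝ → ℂ, IsSchrodingerSolution v (k : ℂ) h h' h'' →
      ∃ c₁ c₂ : ℂ, ∀ x : ℝ, h x = c₁ * g₁ x + c₂ * f₁ x) ∧
    (∃! p : ℂ × ℂ, ∀ x : ℝ, f₂ x = p.1 * g₁ x + p.2 * f₁ x) ∧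
    (∀ a b : ℂ, (∀ x : ℝ, f₂ x = a * g₁ x + b * f₁ x) →
      (∀ x : ℝ, a = (f₁' x * f₂ x - f₁ x * f₂' x) / (2 * Complex.I * k)) ∧
      ‖a‖ ^ 2 = 1 + ‖b‖ ^ 2) := by
  rw [isSchrodingerSolution_neg_iff] at hg
  have hW x : wronskian f₁ f₁' g₁ g₁' x = 2 * I * k :=
    h1.wronskian_eq_of_isJostAtPlusInfinity hj1 hg hjg x
  have hk₂ : 2 * I * (k : ℂ) ≠ 0 := by simp [hk]
  have hW₀ : wronskian f₁ f₁' g₁ g₁' 0 ≠ 0 := hW 0 ▸ hk₂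
  have hindep c₁ c₂ : (∀ x, c₁ * g₁ x + c₂ * f₁ x = 0) → c₁ = 0 ∧ c₂ = 0 :=
    coeffs_eq_zero_of_wronskian_ne_zero h1.1 hg.1 hW₀
  have hspan h h' h'' (hh : IsSchrodingerSolution v k h h' h'') :
      ∃ c₁ c₂ : ℂ, ∀ x, h x = c₁ * g₁ x + c₂ * f₁ x :=
    h1.exists_eq_add_of_wronskian_ne_zero hv hg hW₀ hh
  refine ⟨hindep, hspan, existsUnique_of_exists_of_coeffs_eq_zero hindep (hspan _ _ _ h2),
    fun a b hab => ?_⟩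
  have hgc := hg.conj
  have hgcj := hjg.conj
  simp only [conj_ofReal, map_neg, neg_neg] at hgc hgcj
  obtain ⟨rfl, rfl⟩ := hj1.unique hk h1 hgc hgcj
  obtain rfl : f₂ = fun x => a * g₁ x + b * conj (g₁ x) := funext hab
  obtain rfl : f₂' = fun x => a * g₁' x + b * conj (g₁' x) :=
    funext fun x => (h2.1 x).unique (((hg.1 x).const_mul a).add ((hgc.1 x).const_mul b))
  have h2c := h2.conj
  have h2cj := hj2.conj
  rw [conj_ofReal] at h2c h2cj
  refine ⟨fun x => ?_, norm_sq_eq_one_add_norm_sq_of_wronskian_eq hk₂ (hW 0)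
    (h2.wronskian_eq_of_isJostAtMinusInfinity hj2 h2c h2cj 0)⟩
  rw [eq_div_iff hk₂, ← hW x]
  simp only [wronskian]
  ring

/-- for real `k ≠ 0` the Jost solutions `f₁(·,k)`, `f₁(·,-k)` form a basis of the
solution space of `-f'' + v·f = k²·f`; in the decomposition
`f₂(x,k) = a(k) f₁(x,-k) + b(k) f₁(x,k)` the coefficients `a, b` are unique, satisfy
`a(k) = W(f₁(·,k), f₂(·,k))/(2ik)` (with `W(f,g) = f'g - fg'`) and `|a(k)|² = 1 + |b(k)|²`. -/
theorem transition_coefficients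
    (v : ℝ → ℝ) (hv : Continuous v)
    (hint : Integrable (fun x : ℝ => (1 + |x|) * |v x|))
    (k : ℝ) (hk : k ≠ 0)
    (f₁ f₁' f₁'' g₁ g₁' g₁'' f₂ f₂' f₂'' : ℝ → ℂ)
    (h1 : IsSchrodingerSolution v (k : ℂ) f₁ f₁' f₁'')
    (hj1 : IsJostAtPlusInfinity (k : ℂ) f₁ f₁')
    (hg : IsSchrodingerSolution v (-(k : ℂ)) g₁ g₁' g₁'')
    (hjg : IsJostAtPlusInfinity (-(k : ℂ)) g₁ g₁')
    (h2 : IsSchrodingerSolution v (k : ℂ) f₂ f₂' f₂'')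
    (hj2 : IsJostAtMinusInfinity (k : ℂ) f₂ f₂') :
    (∀ c₁ c₂ : ℂ, (∀ x : ℝ, c₁ * g₁ x + c₂ * f₁ x = 0) → c₁ = 0 ∧ c₂ = 0) ∧
    (∀ h h' h'' : ℝ → ℂ, IsSchrodingerSolution v (k : ℂ) h h' h'' →
      ∃ c₁ c₂ : ℂ, ∀ x : ℝ, h x = c₁ * g₁ x + c₂ * f₁ x) ∧
    (∃! p : ℂ × ℂ, ∀ x : ℝ, f₂ x = p.1 * g₁ x + p.2 * f₁ x) ∧
    (∀ a b : ℂ, (∀ x : ℝ, f₂ x = a * g₁ x + b * f₁ x) →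
      (∀ x : ℝ, a = (f₁' x * f₂ x - f₁ x * f₂' x) / (2 * Complex.I * k)) ∧
      ‖a‖ ^ 2 = 1 + ‖b‖ ^ 2) :=
  transition_coefficients_general v hv k hk f₁ f₁' f₁'' g₁ g₁' g₁'' f₂ f₂' f₂'' h1 hj1 hg hjg h2 hj2
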